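/- Let L/K be a finite Galois field extension, G a group acting on L via a surjection onto Gal(L/K) with kernel H, and V a semilinear representation of G over L (of finite dimension n over L). Then there is an isomorphism of L ⋊ G-modules (L ⋊ G) ⊗_{L[H]} (V restricted to L[H]) ≅ V^{⊕[L:K]}. -/

import Mathlib

/-!
Identify `Γ = Gal(L/K)` with `G ⧸ H` through `σ`. The induced representation is then modelled by
`Γ → V` with `g` acting as `(g • ψ) τ = g (ψ (σ(g)⁻¹ τ))` and `V` sitting inside as the functions
supported at `1`. Choosing `s τ ∈ σ⁻¹(τ)`, the map `ψ ↦ ∑ τ, s τ • β ((s τ)⁻¹ • ψ τ)` is a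
`G`-equivariant inverse of the map given by the universal property, because the model is spanned
by the `G`-translates of `V`. The twist is removed by the matrix `(τ (b i))` for a `K`-basis `b` of
`L`: it is invertible by Dedekind's independence of characters and intertwines the diagonal action
on `V^[L:K]` with the twisted one.
-/

universe u

open Module
open scoped Matrix.Module

def Matrix.Module.unitsLinearEquiv {ι R M : Type*} [Fintype ι] [DecidableEq ι] [CommRing R]
    [AddCommGroup M] [Module R M] (u : (Matrix ι ι R)ˣ) : (ι → M) ≃ₗ[R] (ι → M) where
  toFun v := (u : Matrix ι ι R) • v
  invFun v := (↑u⁻¹ : Matrix ι ι R) • v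
  map_add' := smul_add _
  map_smul' c v := by ext i; simp [Finset.smul_sum, smul_comm c]
  left_inv v := by simp [smul_smul]
  right_inv v := by simp [smul_smul]

section GaloisMatrix

variable {K L : Type*} [Field K] [Field L] [Algebra K L] {ι : Type*}

noncomputable def galoisMatrix (b : Basis ι K L) : Matrix (L ≃ₐ[K] L) ι L :=
  Matrix.of fun τ i => τ (b i)

lemma linearIndependent_galoisMatrix_row (b : Basis ι K L) :
    LinearIndependent L (galoisMatrix b).row := by
  have hDedekind : LinearIndependent L fun τ : L ≃ₐ[K] L => (τ : L →ₐ[K] L).toLinearMap :=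
    (linearIndependent_toLinearMap K L L).comp _ AlgEquiv.coe_toAlgHom_injective
  have hrow : (galoisMatrix b).row =
      (b.constr L).symm ∘ fun τ : L ≃ₐ[K] L => (τ : L →ₐ[K] L).toLinearMap := by
    ext τ i
    simp [galoisMatrix]
  rw [hrow]
  exact hDedekind.map' (b.constr L).symm.toLinearMap (LinearEquiv.ker _)

end GaloisMatrix

section Semilinear

variable {K L : Type*} [Field K] [Field L] [Algebra K L] {G : Type*} [Group G]
  {V T : Type*} [AddCommGroup V] [Module K V] [AddCommGroup T] [Module K T]

def piRep (ι : Type*) (ρ : G →* (V ≃ₗ[K] V)) : G →* ((ι → V) ≃ₗ[K] (ι → V)) where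
  toFun g := LinearEquiv.piCongrRight fun _ => ρ g
  map_one' := by ext; simp
  map_mul' g h := by ext; simp

lemma piRep_apply (ι : Type*) (ρ : G →* (V ≃ₗ[K] V)) (g : G) (v : ι → V) (i : ι) :
    piRep ι ρ g v i = ρ g (v i) := rfl

def twist (σ : G →* (L ≃ₐ[K] L)) (ρV : G →* (V ≃ₗ[K] V)) (g : G) (ψ : (L ≃ₐ[K] L) → V) :
    (L ≃ₐ[K] L) → V :=
  fun τ => ρV g (ψ ((σ g)⁻¹ * τ))

variable {σ : G →* (L ≃ₐ[K] L)} {ρV : G →* (V ≃ₗ[K] V)} {ρT : G →* (T ≃ₗ[K] T)}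

lemma twist_single [DecidableEq (L ≃ₐ[K] L)] (g : G) (τ : L ≃ₐ[K] L) (x : V) :
    twist σ ρV g (Pi.single τ x) = Pi.single (σ g * τ) (ρV g x) := by
  ext τ'
  by_cases h : τ' = σ g * τ
  · simp [twist, h]
  · have : (σ g)⁻¹ * τ' ≠ τ := fun h' => h (by rw [← h', mul_inv_cancel_left])
    simp [twist, h, this]

lemma single_eq_twist_single [DecidableEq (L ≃ₐ[K] L)] (g : G) (x : V) :
    Pi.single (σ g) x = twist σ ρV g (Pi.single 1 (ρV g⁻¹ x)) := by
  rw [twist_single, mul_one]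
  simp

variable [Module L V] [Module L T]

lemma piRep_smul (hρV : ∀ g (c : L) (v : V), ρV g (c • v) = σ g c • ρV g v)
    (ι : Type*) (g : G) (c : L) (v : ι → V) : piRep ι ρV g (c • v) = σ g c • piRep ι ρV g v := by
  ext i
  simp [piRep_apply, hρV]

lemma twist_ext [FiniteDimensional K L] [DecidableEq (L ≃ₐ[K] L)] (hσ : Function.Surjective σ)
    {U : Type*} [AddCommGroup U] [Module L U] (ρU : G → U → U) {F₁ F₂ : ((L ≃ₐ[K] L) → V) →ₗ[L] U}
    (h₁ : ∀ g ψ, F₁ (twist σ ρV g ψ) = ρU g (F₁ ψ))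
    (h₂ : ∀ g ψ, F₂ (twist σ ρV g ψ) = ρU g (F₂ ψ))
    (h : ∀ x, F₁ (Pi.single 1 x) = F₂ (Pi.single 1 x)) : F₁ = F₂ := by
  refine LinearMap.pi_ext fun τ x => ?_
  obtain ⟨g, rfl⟩ := hσ τ
  rw [single_eq_twist_single, h₁, h₂, h]

lemma twist_galoisMatrix_smul [Fintype (L ≃ₐ[K] L)] [DecidableEq (L ≃ₐ[K] L)]
    (hρV : ∀ g (c : L) (v : V), ρV g (c • v) = σ g c • ρV g v)
    (b : Basis (L ≃ₐ[K] L) K L) (g : G) (v : (L ≃ₐ[K] L) → V) :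
    twist σ ρV g (galoisMatrix b • v) = galoisMatrix b • fun τ => ρV g (v τ) := by
  ext τ
  simp [twist, map_sum, hρV, galoisMatrix]

lemma exists_linearEquiv_twist_piRep [FiniteDimensional K L] [IsGalois K L]
    (hρV : ∀ g (c : L) (v : V), ρV g (c • v) = σ g c • ρV g v) :
    ∃ Ψ : ((L ≃ₐ[K] L) → V) ≃ₗ[L] (Fin (finrank K L) → V),
      ∀ g ψ, Ψ (twist σ ρV g ψ) = piRep _ ρV g (Ψ ψ) := by
  classical
  obtain ⟨e⟩ : Nonempty (Fin (finrank K L) ≃ (L ≃ₐ[K] L)) :=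
    Fintype.card_eq.1 (by simp [← IsGalois.card_aut_eq_finrank, Nat.card_eq_fintype_card])
  let b := (Module.finBasis K L).reindex e
  obtain ⟨A, hA⟩ :=
    Matrix.linearIndependent_rows_iff_isUnit.1 (linearIndependent_galoisMatrix_row b)
  let Φ := (LinearEquiv.funCongrLeft L V e.symm).trans (Matrix.Module.unitsLinearEquiv A)
  have hΦ : ∀ g v, Φ (piRep _ ρV g v) = twist σ ρV g (Φ v) := fun g v => by
    simp [Φ, Matrix.Module.unitsLinearEquiv, hA, twist_galoisMatrix_smul hρV]
    rfl
  exact ⟨Φ.symm, fun g ψ => by rw [Φ.symm_apply_eq, hΦ, Φ.apply_symm_apply]⟩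

variable (hρV : ∀ g (c : L) (v : V), ρV g (c • v) = σ g c • ρV g v)
  (hρT : ∀ g (c : L) (t : T), ρT g (c • t) = σ g c • ρT g t)

def conjMap (β : V →ₗ[L] T) (g : G) : V →ₗ[L] T where
  toFun x := ρT g (β (ρV g⁻¹ x))
  map_add' x y := by simp
  map_smul' c x := by
    rw [hρV, map_smul, hρT, RingHom.id_apply, ← AlgEquiv.mul_apply, ← map_mul, mul_inv_cancel,
      map_one, AlgEquiv.one_apply]

noncomputable def fromTwisted [FiniteDimensional K L] (β : V →ₗ[L] T) (s : (L ≃ₐ[K] L) → G) :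
    ((L ≃ₐ[K] L) → V) →ₗ[L] T :=
  ∑ τ, conjMap hρV hρT β (s τ) ∘ₗ LinearMap.proj τ

variable {β : V →ₗ[L] T}

lemma conjMap_apply (g : G) (x : V) : conjMap hρV hρT β g x = ρT g (β (ρV g⁻¹ x)) := rfl

lemma conjMap_mul_apply (g g' : G) (x : V) :
    conjMap hρV hρT β (g * g') (ρV g x) = ρT g (conjMap hρV hρT β g' x) := by
  simp [conjMap_apply]

lemma conjMap_of_mem_ker (hβ : ∀ h ∈ σ.ker, ∀ v, β (ρV h v) = ρT h (β v)) {h : G}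
    (hh : h ∈ σ.ker) : conjMap hρV hρT β h = β := by
  ext x
  rw [conjMap_apply, ← hβ h hh]
  simp

lemma conjMap_congr (hβ : ∀ h ∈ σ.ker, ∀ v, β (ρV h v) = ρT h (β v)) {g g' : G}
    (hg : σ g = σ g') : conjMap hρV hρT β g = conjMap hρV hρT β g' := by
  have hk : g⁻¹ * g' ∈ σ.ker := by simp [hg]
  ext x
  calc conjMap hρV hρT β g x = ρT g (conjMap hρV hρT β (g⁻¹ * g') (ρV g⁻¹ x)) := by
        rw [conjMap_of_mem_ker hρV hρT hβ hk, conjMap_apply]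
    _ = conjMap hρV hρT β g' x := by
        rw [← conjMap_mul_apply, mul_inv_cancel_left]
        simp

variable [FiniteDimensional K L]

lemma fromTwisted_apply (s : (L ≃ₐ[K] L) → G) (ψ : (L ≃ₐ[K] L) → V) :
    fromTwisted hρV hρT β s ψ = ∑ τ, conjMap hρV hρT β (s τ) (ψ τ) := by
  simp [fromTwisted]

lemma fromTwisted_single [DecidableEq (L ≃ₐ[K] L)]
    (hβ : ∀ h ∈ σ.ker, ∀ v, β (ρV h v) = ρT h (β v)) {s : (L ≃ₐ[K] L) → G} (hs : σ (s 1) = 1)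
    (x : V) : fromTwisted hρV hρT β s (Pi.single 1 x) = β x := by
  rw [fromTwisted_apply, Fintype.sum_eq_single 1 fun τ hτ => by simp [hτ], Pi.single_eq_same,
    conjMap_of_mem_ker hρV hρT hβ hs]

lemma fromTwisted_twist (hβ : ∀ h ∈ σ.ker, ∀ v, β (ρV h v) = ρT h (β v))
    {s : (L ≃ₐ[K] L) → G} (hs : ∀ τ, σ (s τ) = τ) (g : G) (ψ : (L ≃ₐ[K] L) → V) :
    fromTwisted hρV hρT β s (twist σ ρV g ψ) = ρT g (fromTwisted hρV hρT β s ψ) := by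
  rw [fromTwisted_apply, fromTwisted_apply, map_sum]
  refine Fintype.sum_equiv (Equiv.mulLeft (σ g)⁻¹) _ _ fun τ => ?_
  have hσ : σ (s τ) = σ (g * s ((σ g)⁻¹ * τ)) := by simp [hs]
  rw [twist, conjMap_congr hρV hρT hβ hσ, conjMap_mul_apply]
  rfl

end Semilinear

section Induced

/-- `β : V → T` exhibits `T` as `(L ⋊ G) ⊗_{L[ker σ]} V`. -/
def IsInducedRep {K L : Type*} [Field K] [Field L] [Algebra K L] {G : Type*} [Group G]
    (σ : G →* (L ≃ₐ[K] L)) {V T : Type u} [AddCommGroup V] [Module K V] [Module L V]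
    [AddCommGroup T] [Module K T] [Module L T]
    (ρV : G →* (V ≃ₗ[K] V)) (ρT : G →* (T ≃ₗ[K] T)) (β : V →ₗ[L] T) : Prop :=
  ∀ (U : Type u) [AddCommGroup U] [Module K U] [Module L U] [IsScalarTower K L U]
    (ρU : G →* (U ≃ₗ[K] U)), (∀ g (c : L) (x : U), ρU g (c • x) = σ g c • ρU g x) →
    ∀ f : V →ₗ[L] U, (∀ h ∈ σ.ker, ∀ v : V, f (ρV h v) = ρU h (f v)) →
    ∃! F : T →ₗ[L] U, (∀ (g : G) (t : T), F (ρT g t) = ρU g (F t)) ∧ ∀ v : V, F (β v) = f v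

variable {K L : Type*} [Field K] [Field L] [Algebra K L] {G : Type*} [Group G]
  {σ : G →* (L ≃ₐ[K] L)} {V T U : Type u} [AddCommGroup V] [Module K V] [Module L V]
  [AddCommGroup T] [Module K T] [Module L T] [IsScalarTower K L T]
  [AddCommGroup U] [Module K U] [Module L U] [IsScalarTower K L U]
  {ρV : G →* (V ≃ₗ[K] V)} {ρT : G →* (T ≃ₗ[K] T)} {ρU : G →* (U ≃ₗ[K] U)} {β : V →ₗ[L] T}

lemma IsInducedRep.exists_linearEquiv (huniv : IsInducedRep σ ρV ρT β)
    (hρT : ∀ g (c : L) (t : T), ρT g (c • t) = σ g c • ρT g t)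
    (hβ : ∀ h ∈ σ.ker, ∀ v, β (ρV h v) = ρT h (β v))
    (hρU : ∀ g (c : L) (x : U), ρU g (c • x) = σ g c • ρU g x)
    {f : V →ₗ[L] U} (hf : ∀ h ∈ σ.ker, ∀ v, f (ρV h v) = ρU h (f v))
    {F' : U →ₗ[L] T} (hF'ρ : ∀ g x, F' (ρU g x) = ρT g (F' x)) (hF'f : ∀ v, F' (f v) = β v)
    (hext : ∀ F₁ F₂ : U →ₗ[L] U, (∀ g x, F₁ (ρU g x) = ρU g (F₁ x)) →
      (∀ g x, F₂ (ρU g x) = ρU g (F₂ x)) → (∀ v, F₁ (f v) = F₂ (f v)) → F₁ = F₂) :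
    ∃ e : T ≃ₗ[L] U, ∀ g t, e (ρT g t) = ρU g (e t) := by
  obtain ⟨F, ⟨hFρ, hFf⟩, -⟩ := huniv U ρU hρU f hf
  have hF'F : F' ∘ₗ F = LinearMap.id :=
    (huniv T ρT hρT β hβ).unique (y₁ := F' ∘ₗ F) (y₂ := LinearMap.id)
      ⟨fun g t => by simp [hFρ, hF'ρ], fun v => by simp [hFf, hF'f]⟩ ⟨fun _ _ => rfl, fun _ => rfl⟩
  have hFF' : F ∘ₗ F' = LinearMap.id :=
    hext _ _ (fun g x => by simp [hFρ, hF'ρ]) (fun _ _ => rfl) fun v => by simp [hFf, hF'f]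
  exact ⟨LinearEquiv.ofLinearMap F F' hFF' hF'F, hFρ⟩

lemma IsInducedRep.exists_linearEquiv_of_twist [FiniteDimensional K L]
    (huniv : IsInducedRep σ ρV ρT β) (hσ : Function.Surjective σ)
    (hρV : ∀ g (c : L) (v : V), ρV g (c • v) = σ g c • ρV g v)
    (hρT : ∀ g (c : L) (t : T), ρT g (c • t) = σ g c • ρT g t)
    (hβ : ∀ h ∈ σ.ker, ∀ v, β (ρV h v) = ρT h (β v))
    (hρU : ∀ g (c : L) (x : U), ρU g (c • x) = σ g c • ρU g x)
    (Ψ : ((L ≃ₐ[K] L) → V) ≃ₗ[L] U) (hΨ : ∀ g ψ, Ψ (twist σ ρV g ψ) = ρU g (Ψ ψ)) :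
    ∃ e : T ≃ₗ[L] U, ∀ g t, e (ρT g t) = ρU g (e t) := by
  classical
  have hΨsymm : ∀ g x, Ψ.symm (ρU g x) = twist σ ρV g (Ψ.symm x) := fun g x => by
    rw [Ψ.symm_apply_eq, hΨ, Ψ.apply_symm_apply]
  have hs : ∀ τ, σ (Function.surjInv hσ τ) = τ := Function.surjInv_eq hσ
  refine huniv.exists_linearEquiv hρT hβ hρU
    (f := Ψ.toLinearMap ∘ₗ LinearMap.single L (fun _ => V) 1)
    (F' := fromTwisted hρV hρT β (Function.surjInv hσ) ∘ₗ Ψ.symm.toLinearMap)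
    (fun h hh v => by simp [← hΨ, twist_single, show σ h = 1 from hh])
    (fun g x => by simp [hΨsymm, fromTwisted_twist hρV hρT hβ hs])
    (fun v => by simp [fromTwisted_single hρV hρT hβ (hs 1)]) fun F₁ F₂ h₁ h₂ h => ?_
  have hΨext := twist_ext hσ (ρV := ρV) (fun g => ρU g) (F₁ := F₁ ∘ₗ Ψ.toLinearMap)
    (F₂ := F₂ ∘ₗ Ψ.toLinearMap) (by simp [hΨ, h₁]) (by simp [hΨ, h₂]) h
  exact LinearMap.ext fun x => by simpa using LinearMap.congr_fun hΨext (Ψ.symm x)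

end Induced

theorem stmt8_general {K L : Type*} [Field K] [Field L] [Algebra K L]
    [FiniteDimensional K L] [IsGalois K L]
    {G : Type*} [Group G] (σ : G →* (L ≃ₐ[K] L)) (hσ : Function.Surjective σ)
    (V : Type u) [AddCommGroup V] [Module K V] [Module L V] [IsScalarTower K L V]
    (ρV : G →* (V ≃ₗ[K] V)) (hρV : ∀ g (c : L) (v : V), ρV g (c • v) = σ g c • ρV g v)
    -- `(T, ρT, β)`: a semilinear representation of `G` with an `L[H]`-linear map from `V`
    (T : Type u) [AddCommGroup T] [Module K T] [Module L T] [IsScalarTower K L T]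
    (ρT : G →* (T ≃ₗ[K] T)) (hρT : ∀ g (c : L) (t : T), ρT g (c • t) = σ g c • ρT g t)
    (β : V →ₗ[L] T) (hβ : ∀ h ∈ σ.ker, ∀ v : V, β (ρV h v) = ρT h (β v))
    -- universal property of the induced module
    (huniv : ∀ (U : Type u) [AddCommGroup U] [Module K U] [Module L U]
      [IsScalarTower K L U] (ρU : G →* (U ≃ₗ[K] U)),
      (∀ g (c : L) (x : U), ρU g (c • x) = σ g c • ρU g x) →
      ∀ f : V →ₗ[L] U, (∀ h ∈ σ.ker, ∀ v : V, f (ρV h v) = ρU h (f v)) →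
      ∃! F : T →ₗ[L] U,
        (∀ (g : G) (t : T), F (ρT g t) = ρU g (F t)) ∧ ∀ v : V, F (β v) = f v) :
    -- conclusion: `T ≅ V^{⊕[L:K]}` equivariantly
    ∃ e : T ≃ₗ[L] (Fin (Module.finrank K L) → V),
      ∀ (g : G) (t : T) (i : Fin (Module.finrank K L)),
        e (ρT g t) i = ρV g (e t i) := by
  obtain ⟨Ψ, hΨ⟩ := exists_linearEquiv_twist_piRep hρV
  obtain ⟨e, he⟩ := IsInducedRep.exists_linearEquiv_of_twist (huniv := huniv) hσ hρV hρT hβ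
    (piRep_smul hρV _) Ψ hΨ
  exact ⟨e, fun g t => congrFun (he g t)⟩

/-- Let `L/K` be a finite Galois field extension, `G` a group acting on
`L` via a surjection onto `Gal(L/K)` with kernel `H = ker σ`, and `V` a
finite-dimensional semilinear representation of `G` over `L`.  If `(T, β)` is the
induction `(L ⋊ G) ⊗_{L[H]} (V|_H)` — i.e. `β : V|_H → T` is an `L[H]`-linear map which
is universal among `L[H]`-linear maps from `V|_H` to semilinear representations of `G` —
then `T ≅ V^{⊕[L:K]}` as semilinear representations of `G` over `L`. -/
theorem stmt8 {K L : Type*} [Field K] [Field L] [Algebra K L]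
    [FiniteDimensional K L] [IsGalois K L]
    {G : Type*} [Group G] (σ : G →* (L ≃ₐ[K] L)) (hσ : Function.Surjective σ)
    (V : Type u) [AddCommGroup V] [Module K V] [Module L V] [IsScalarTower K L V]
    [FiniteDimensional L V]
    (ρV : G →* (V ≃ₗ[K] V)) (hρV : ∀ g (c : L) (v : V), ρV g (c • v) = σ g c • ρV g v)
    -- `(T, ρT, β)`: a semilinear representation of `G` with an `L[H]`-linear map from `V`
    (T : Type u) [AddCommGroup T] [Module K T] [Module L T] [IsScalarTower K L T]
    (ρT : G →* (T ≃ₗ[K] T)) (hρT : ∀ g (c : L) (t : T), ρT g (c • t) = σ g c • ρT g t)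
    (β : V →ₗ[L] T) (hβ : ∀ h ∈ σ.ker, ∀ v : V, β (ρV h v) = ρT h (β v))
    -- universal property of the induced module
    (huniv : ∀ (U : Type u) [AddCommGroup U] [Module K U] [Module L U]
      [IsScalarTower K L U] (ρU : G →* (U ≃ₗ[K] U)),
      (∀ g (c : L) (x : U), ρU g (c • x) = σ g c • ρU g x) →
      ∀ f : V →ₗ[L] U, (∀ h ∈ σ.ker, ∀ v : V, f (ρV h v) = ρU h (f v)) →
      ∃! F : T →ₗ[L] U,
        (∀ (g : G) (t : T), F (ρT g t) = ρU g (F t)) ∧ ∀ v : V, F (β v) = f v) :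
    -- conclusion: `T ≅ V^{⊕[L:K]}` equivariantly
    ∃ e : T ≃ₗ[L] (Fin (Module.finrank K L) → V),
      ∀ (g : G) (t : T) (i : Fin (Module.finrank K L)),
        e (ρT g t) i = ρV g (e t i) :=
  stmt8_general σ hσ V ρV hρV T ρT hρT β hβ huniv
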